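/- Every matrix M ∈ SL(n, ℚ_p) admits an Iwasawa decomposition M = N·A·K where N ∈ SL(n, ℚ_p) is unit upper triangular, A ∈ SL(n, ℚ_p) is diagonal, and K ∈ SL(n, ℤ_p). -/
import Mathlib


open IsUltrametricDist in
lemma aux_det_norm_le_one {p : ℕ} [Fact p.Prime] {m : Type*} [DecidableEq m] [Fintype m]
    (K : Matrix m m ℚ_[p]) (hK : ∀ i j, ‖K i j‖ ≤ 1) : ‖K.det‖ ≤ 1 := by
  rw [Matrix.det_apply]
  refine norm_sum_le_of_forall_le_of_nonneg zero_le_one fun σ _ => ?_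
  have h1 : ‖Equiv.Perm.sign σ • ∏ i, K (σ i) i‖ = ‖∏ i, K (σ i) i‖ := by
    rcases Int.units_eq_one_or (Equiv.Perm.sign σ) with h | h <;>
      simp [h, Units.smul_def]
  rw [h1, norm_prod]
  exact Finset.prod_le_one (fun i _ => norm_nonneg _) (fun i _ => hK _ _)

open IsUltrametricDist in
lemma aux_mul_entry_le_one {p : ℕ} [Fact p.Prime] {m : Type*} [Fintype m]
    (A B : Matrix m m ℚ_[p]) (hA : ∀ i j, ‖A i j‖ ≤ 1) (hB : ∀ i j, ‖B i j‖ ≤ 1) :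
    ∀ i j, ‖(A * B) i j‖ ≤ 1 := by
  intro i j
  rw [Matrix.mul_apply]
  refine norm_sum_le_of_forall_le_of_nonneg zero_le_one fun k _ => ?_
  rw [norm_mul]
  exact mul_le_one₀ (hA _ _) (norm_nonneg _) (hB _ _)

lemma aux_triangularize {p : ℕ} [Fact p.Prime] :
    ∀ (n : ℕ) (M : Matrix (Fin n) (Fin n) ℚ_[p]), M.det ≠ 0 →
    ∃ K : Matrix (Fin n) (Fin n) ℚ_[p],
      (∀ i j, ‖K i j‖ ≤ 1) ∧ ‖K.det‖ = 1 ∧ ∀ i j, j < i → (M * K) i j = 0 := by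
  intro n
  induction n with
  | zero =>
    intro M _
    exact ⟨1, fun i => i.elim0, by simp, fun i => i.elim0⟩
  | succ n IH =>
    intro M hMdet
    set l : Fin (n + 1) := Fin.last n with hl
    -- the last row is nonzero
    have hrow : ∃ j, M l j ≠ 0 := by
      by_contra h
      push_neg at h
      exact hMdet (Matrix.det_eq_zero_of_row_eq_zero l h)
    obtain ⟨j1, hj1⟩ := hrow
    -- pick a column with maximal norm in the last row
    obtain ⟨j0, -, hj0⟩ := Finset.exists_max_image Finset.univ (fun j => ‖M l j‖)
      ⟨j1, Finset.mem_univ j1⟩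
    have hj0' : ∀ j, ‖M l j‖ ≤ ‖M l j0‖ := fun j => hj0 j (Finset.mem_univ j)
    set σ : Equiv.Perm (Fin (n + 1)) := Equiv.swap j0 l with hσ
    set K1 : Matrix (Fin (n + 1)) (Fin (n + 1)) ℚ_[p] := σ.permMatrix ℚ_[p] with hK1
    set M1 : Matrix (Fin (n + 1)) (Fin (n + 1)) ℚ_[p] := M.submatrix id σ with hM1
    have hMK1 : M * K1 = M1 := by
      rw [hK1, hM1, Equiv.Perm.permMatrix, PEquiv.mul_toMatrix_toPEquiv]
      simp [hσ, Equiv.symm_swap]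
    set a : ℚ_[p] := M l j0 with ha
    have ha0 : a ≠ 0 := by
      intro h
      apply hj1
      have := hj0' j1
      rw [h, norm_zero] at this
      exact norm_le_zero_iff.mp this
    have hM1l : ∀ j, ‖M1 l j‖ ≤ ‖a‖ := fun j => hj0' (σ j)
    have hM1ll : M1 l l = a := by simp [hM1, hσ, Equiv.swap_apply_right, ha]
    -- clearing matrix
    set c : Fin (n + 1) → ℚ_[p] := fun j => if j = l then 0 else -(M1 l j) / a with hc
    set C : Matrix (Fin (n + 1)) (Fin (n + 1)) ℚ_[p] := Matrix.of fun i j =>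
      if i = l then c j else 0 with hC
    set K2 : Matrix (Fin (n + 1)) (Fin (n + 1)) ℚ_[p] := 1 + C with hK2
    have hcnorm : ∀ j, ‖c j‖ ≤ 1 := by
      intro j
      rw [hc]
      by_cases hj : j = l
      · simp [hj]
      · simp only [if_neg hj, norm_div, norm_neg]
        rw [div_le_one (norm_pos_iff.mpr ha0)]
        exact hM1l j
    have hMC : ∀ i j, (M1 * C) i j = M1 i l * c j := by
      intro i j
      rw [Matrix.mul_apply]
      simp [hC, Finset.sum_ite_eq]
    have hM1K2 : ∀ i j, (M1 * K2) i j = M1 i j + M1 i l * c j := by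
      intro i j
      rw [hK2, Matrix.mul_add, Matrix.mul_one, Matrix.add_apply, hMC]
    have hK2tri : ∀ i j : Fin (n + 1), i < j → K2 i j = 0 := by
      intro i j hij
      rw [hK2, Matrix.add_apply, Matrix.one_apply_ne (ne_of_lt hij)]
      simp only [hC, Matrix.of_apply, zero_add]
      by_cases hi : i = l
      · exact absurd hij (by rw [hi]; exact not_lt.mpr (Fin.le_last j))
      · simp [hi]
    have hK2diag : ∀ i, K2 i i = 1 := by
      intro i
      rw [hK2, Matrix.add_apply, Matrix.one_apply_eq]
      simp only [hC, Matrix.of_apply]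
      by_cases hi : i = l
      · simp [hi, hc]
      · simp [hi]
    have hK2det : K2.det = 1 := by
      rw [Matrix.det_of_lowerTriangular K2 ?_]
      · simp [hK2diag]
      · intro i j hij
        exact hK2tri i j hij
    have hK2norm : ∀ i j, ‖K2 i j‖ ≤ 1 := by
      intro i j
      rcases lt_trichotomy i j with h | h | h
      · rw [hK2tri i j h]; simp
      · rw [h, hK2diag]; simp
      · rw [hK2, Matrix.add_apply, Matrix.one_apply_ne (ne_of_gt h)]
        simp only [hC, Matrix.of_apply, zero_add]
        by_cases hi : i = l
        · simp only [if_pos hi]; exact hcnorm j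
        · simp [hi]
    set X : Matrix (Fin (n + 1)) (Fin (n + 1)) ℚ_[p] := M1 * K2 with hX
    have hXrow : ∀ j, j ≠ l → X l j = 0 := by
      intro j hj
      rw [hM1K2, hM1ll, hc]
      simp only [if_neg hj]
      field_simp
      ring
    have hK1det : ‖K1.det‖ = 1 := by
      rw [hK1, Matrix.det_permutation]
      rcases Int.units_eq_one_or (Equiv.Perm.sign σ) with h | h <;> simp [h]
    have hXdet : X.det ≠ 0 := by
      rw [hX, Matrix.det_mul, hK2det, mul_one, ← hMK1, Matrix.det_mul]
      refine mul_ne_zero hMdet fun h => ?_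
      rw [h] at hK1det
      simp at hK1det
    set B : Matrix (Fin n) (Fin n) ℚ_[p] := X.submatrix Fin.castSucc Fin.castSucc with hB
    have hdetX : X.det = (-1) ^ ((l : ℕ) + (l : ℕ)) * X l l * B.det := by
      rw [Matrix.det_succ_row X l, Finset.sum_eq_single l]
      · rw [hB]
        congr 1
        rw [hl, Fin.succAbove_last]
      · intro j _ hjl
        rw [hXrow j hjl]
        ring
      · simp
    have hBdet : B.det ≠ 0 := fun h => hXdet (by rw [hdetX, h, mul_zero])
    obtain ⟨K', hK'norm, hK'det, hK'tri⟩ := IH B hBdet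
    set e : Fin n ⊕ Fin 1 ≃ Fin (n + 1) := finSumFinEquiv with he
    set F : Matrix (Fin n ⊕ Fin 1) (Fin n ⊕ Fin 1) ℚ_[p] :=
      Matrix.fromBlocks K' 0 0 1 with hF
    set K3 : Matrix (Fin (n + 1)) (Fin (n + 1)) ℚ_[p] := F.submatrix e.symm e.symm with hK3
    have hel : e.symm l = Sum.inr 0 := by
      rw [Equiv.symm_apply_eq, he]
      show Fin.natAdd n 0 = l
      rw [hl]
      ext
      simp
    have hecast : ∀ b : Fin n, e.symm (Fin.castSucc b) = Sum.inl b := by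
      intro b
      rw [Equiv.symm_apply_eq, he]
      rfl
    have hK3cc : ∀ b b' : Fin n, K3 (Fin.castSucc b) (Fin.castSucc b') = K' b b' := by
      intro b b'
      rw [hK3, Matrix.submatrix_apply, hecast, hecast]
      rfl
    have hK3cl : ∀ b' : Fin n, K3 l (Fin.castSucc b') = 0 := by
      intro b'
      rw [hK3, Matrix.submatrix_apply, hel, hecast]
      rfl
    have hK3det : K3.det = K'.det := by
      rw [hK3, Matrix.det_submatrix_equiv_self, hF, Matrix.det_fromBlocks_zero₂₁]
      simp
    have hK3norm : ∀ i j, ‖K3 i j‖ ≤ 1 := by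
      intro i j
      rw [hK3, Matrix.submatrix_apply]
      rcases e.symm i with b | c <;> rcases e.symm j with b' | c'
      · exact hK'norm b b'
      · simp [hF]
      · simp [hF]
      · rw [hF]
        show ‖(1 : Matrix (Fin 1) (Fin 1) ℚ_[p]) c c'‖ ≤ 1
        rcases eq_or_ne c c' with h | h
        · rw [h, Matrix.one_apply_eq]; simp
        · rw [Matrix.one_apply_ne h]; simp
    have hXK3tri : ∀ i j : Fin (n + 1), j < i → (X * K3) i j = 0 := by
      intro i j hij
      have hjl : j ≠ l := by
        intro h
        rw [h, hl] at hij
        exact absurd hij (not_lt.mpr (Fin.le_last i))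
      obtain ⟨b, rfl⟩ := Fin.exists_castSucc_eq.mpr hjl
      rw [Matrix.mul_apply, Fin.sum_univ_castSucc]
      rw [hK3cl, mul_zero, add_zero]
      rcases eq_or_ne i l with hi | hi
      · rw [Finset.sum_eq_zero]
        intro k _
        rw [hi, hXrow _ (Fin.ne_last_of_lt (Fin.castSucc_lt_last k)), zero_mul]
      · obtain ⟨a', rfl⟩ := Fin.exists_castSucc_eq.mpr hi
        have hba : b < a' := by
          rwa [Fin.castSucc_lt_castSucc_iff] at hij
        have := hK'tri a' b hba
        rw [Matrix.mul_apply] at this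
        rw [← this]
        refine Finset.sum_congr rfl fun k _ => ?_
        rw [hK3cc, hB, Matrix.submatrix_apply]
    -- assemble
    refine ⟨K1 * (K2 * K3), ?_, ?_, ?_⟩
    · have h12 : ∀ i j, ‖(K1 * K2) i j‖ ≤ 1 := by
        refine aux_mul_entry_le_one K1 K2 ?_ hK2norm
        intro i j
        rw [hK1]
        show ‖(σ.toPEquiv.toMatrix : Matrix _ _ ℚ_[p]) i j‖ ≤ 1
        rw [PEquiv.toMatrix_apply]
        split <;> simp
      have := aux_mul_entry_le_one (K1 * K2) K3 h12 hK3norm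
      intro i j
      have h' := this i j
      rwa [mul_assoc] at h'
    · rw [Matrix.det_mul, Matrix.det_mul, norm_mul, norm_mul, hK1det, hK2det, hK3det,
        hK'det]
      simp
    · intro i j hij
      have : M * (K1 * (K2 * K3)) = X * K3 := by
        rw [← mul_assoc, ← mul_assoc, hMK1, hX]
      rw [this]
      exact hXK3tri i j hij



/-- Iwasawa decomposition for `SL(n, ℚ_p)`: every `M ∈ SL(n, ℚ_p)` can be written
`M = N * A * K` with `N` unit upper triangular, `A` diagonal of determinant 1, and
`K ∈ SL(n, ℤ_p)`. -/
theorem stmt_2 (p : ℕ) [Fact p.Prime] (n : ℕ)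
    (M : Matrix (Fin n) (Fin n) ℚ_[p]) (hM : M.det = 1) :
    ∃ N A K : Matrix (Fin n) (Fin n) ℚ_[p],
      M = N * A * K ∧
      (∀ i, N i i = 1) ∧ (∀ i j : Fin n, j < i → N i j = 0) ∧
      (∀ i j : Fin n, i ≠ j → A i j = 0) ∧ A.det = 1 ∧
      (∀ i j, ‖K i j‖ ≤ 1) ∧ K.det = 1 := by
  rcases n with _ | m
  · refine ⟨1, 1, 1, ?_, fun i => i.elim0, fun i => i.elim0, fun i => i.elim0, by simp,
      fun i => i.elim0, by simp⟩
    ext i j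
    exact i.elim0
  obtain ⟨K0, hK0norm, hK0det, htri⟩ := aux_triangularize (m + 1) M (hM ▸ one_ne_zero)
  have hK0d0 : K0.det ≠ 0 := fun h => by simp [h] at hK0det
  have hK0unit : IsUnit K0.det := isUnit_iff_ne_zero.mpr hK0d0
  set T : Matrix (Fin (m + 1)) (Fin (m + 1)) ℚ_[p] := M * K0 with hT
  set u : ℚ_[p] := K0.det with hu
  have hunorm : ‖u‖ = 1 := hK0det
  have huinvnorm : ‖u⁻¹‖ = 1 := by rw [norm_inv, hunorm, inv_one]
  have hTdet : T.det = u := by rw [hT, Matrix.det_mul, hM, one_mul]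
  have hMT : M = T * K0⁻¹ := by
    rw [hT, mul_assoc, Matrix.mul_nonsing_inv K0 hK0unit, mul_one]
  have hTtri : ∀ i j : Fin (m + 1), j < i → T i j = 0 := htri
  have hTprod : ∏ i, T i i = u := by
    rw [← hTdet]
    exact (Matrix.det_of_upperTriangular (fun i j hij => hTtri i j hij)).symm
  have hTdiag : ∀ i, T i i ≠ 0 := by
    have : (∏ i, T i i) ≠ 0 := by rw [hTprod]; exact fun h => hK0d0 h
    intro i hi
    exact this (Finset.prod_eq_zero (Finset.mem_univ i) hi)
  set N : Matrix (Fin (m + 1)) (Fin (m + 1)) ℚ_[p] :=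
    Matrix.of fun i j => T i j * (T j j)⁻¹ with hN
  set A0 : Matrix (Fin (m + 1)) (Fin (m + 1)) ℚ_[p] :=
    Matrix.diagonal (fun i => T i i) with hA0
  have hNA0 : N * A0 = T := by
    ext i j
    rw [hA0, Matrix.mul_diagonal]
    show T i j * (T j j)⁻¹ * T j j = T i j
    rw [mul_assoc, inv_mul_cancel₀ (hTdiag j), mul_one]
  set Kinv : Matrix (Fin (m + 1)) (Fin (m + 1)) ℚ_[p] := K0⁻¹ with hKinv
  have hKinvdet : Kinv.det = u⁻¹ := by
    rw [hKinv, Matrix.det_nonsing_inv, Ring.inverse_eq_inv]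
  have hKinvnorm : ∀ i j, ‖Kinv i j‖ ≤ 1 := by
    intro i j
    rw [hKinv, Matrix.inv_def, Matrix.smul_apply, smul_eq_mul, norm_mul,
      Ring.inverse_eq_inv, ← hu]
    have hadj : ‖K0.adjugate i j‖ ≤ 1 := by
      rw [Matrix.adjugate_apply]
      refine aux_det_norm_le_one _ fun i' j' => ?_
      rw [Matrix.updateRow_apply]
      split
      · rw [Pi.single_apply]
        split <;> simp
      · exact hK0norm i' j'
    calc ‖u⁻¹‖ * ‖K0.adjugate i j‖ ≤ 1 * 1 :=
          mul_le_mul (le_of_eq huinvnorm) hadj (norm_nonneg _) zero_le_one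
      _ = 1 := mul_one 1
  set D : Matrix (Fin (m + 1)) (Fin (m + 1)) ℚ_[p] :=
    Matrix.diagonal (fun i => if i = 0 then u⁻¹ else 1) with hD
  set Dinv : Matrix (Fin (m + 1)) (Fin (m + 1)) ℚ_[p] :=
    Matrix.diagonal (fun i => if i = 0 then u else 1) with hDinv
  have hDDinv : D * Dinv = 1 := by
    rw [hD, hDinv, Matrix.diagonal_mul_diagonal]
    have h1 : (fun i : Fin (m + 1) =>
        (if i = 0 then u⁻¹ else 1) * if i = 0 then u else 1) = fun _ => (1 : ℚ_[p]) := by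
      funext i
      split
      · exact inv_mul_cancel₀ hK0d0
      · exact mul_one 1
    rw [h1, Matrix.diagonal_one]
  refine ⟨N, A0 * D, Dinv * Kinv, ?_, ?_, ?_, ?_, ?_, ?_, ?_⟩
  · rw [hMT, ← hNA0]
    simp only [mul_assoc]
    rw [← mul_assoc D, hDDinv, one_mul]
  · intro i
    show T i i * (T i i)⁻¹ = 1
    exact mul_inv_cancel₀ (hTdiag i)
  · intro i j hij
    show T i j * (T j j)⁻¹ = 0
    rw [hTtri i j hij, zero_mul]
  · intro i j hij
    rw [hA0, hD, Matrix.diagonal_mul_diagonal, Matrix.diagonal_apply_ne _ hij]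
  · rw [hA0, hD, Matrix.diagonal_mul_diagonal, Matrix.det_diagonal,
      Finset.prod_mul_distrib, hTprod]
    rw [Finset.prod_ite_eq' Finset.univ (0 : Fin (m + 1)) (fun _ => u⁻¹)]
    simp [mul_inv_cancel₀ hK0d0]
  · refine aux_mul_entry_le_one Dinv Kinv ?_ hKinvnorm
    intro i j
    rcases eq_or_ne i j with h | h
    · rw [h, hDinv, Matrix.diagonal_apply_eq]
      split
      · rw [hunorm]
      · simp
    · rw [hDinv, Matrix.diagonal_apply_ne _ h]
      simp
  · rw [Matrix.det_mul, hKinvdet, hDinv, Matrix.det_diagonal,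
      Finset.prod_ite_eq' Finset.univ (0 : Fin (m + 1)) (fun _ => u)]
    simp [mul_inv_cancel₀ hK0d0]
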